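/- Let K be the bounded linear operator on L²((0,1), ℂ) defined by (K f)(x) = ∫_x^1 f(s) ds. Then the operator norm of K equals 2/π. -/

import Mathlib

open MeasureTheory

/-- Lebesgue measure restricted to the interval `(0,1)`. -/
noncomputable def mu01 : Measure ℝ := volume.restrict (Set.Ioo 0 1)

/-- `K` is the Volterra-type operator `(K f)(x) = ∫_x^1 f(s) ds` on `L²((0,1), ℂ)`. -/
def IsIntOp (K : Lp ℂ 2 mu01 →L[ℂ] Lp ℂ 2 mu01) : Prop :=
  ∀ f : Lp ℂ 2 mu01, ∀ᵐ x ∂mu01, (K f : ℝ → ℂ) x = ∫ s in Set.Ioo x 1, f s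

/-!
Upper bound: the Schur test with the test functions `p s = sin (π s / 2)` and
`q x = cos (π x / 2)`. They satisfy `∫_x^1 p = (2/π) q x` and `∫_0^s q = (2/π) p s`, so weighted
Cauchy–Schwarz against `p` followed by Tonelli gives `‖K f‖² ≤ (2/π)² ‖f‖²`.

Lower bound: `K p = (2/π) q` and `‖p‖ = ‖q‖`, so `p` is extremal.
-/

open Set Function Real
open scoped ENNReal

theorem sq_lintegral_mul_le_lintegral_mul_mul_lintegral_mul_div {α : Type*}
    [MeasurableSpace α] {μ : Measure α} {k w g : α → ℝ≥0∞} (hk : AEMeasurable k μ)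
    (hw : AEMeasurable w μ) (hg : AEMeasurable g μ) (hw₀ : ∀ᵐ a ∂μ, w a ≠ 0)
    (hw_top : ∀ᵐ a ∂μ, w a ≠ ∞) :
    (∫⁻ a, k a * g a ∂μ) ^ 2 ≤ (∫⁻ a, k a * w a ∂μ) * ∫⁻ a, k a * g a ^ 2 / w a ∂μ := by
  have hsplit : ∀ᵐ a ∂μ, k a * g a =
      (k a * w a) ^ (1 / 2 : ℝ) * (k a * g a ^ 2 / w a) ^ (1 / 2 : ℝ) := by
    filter_upwards [hw₀, hw_top] with a h₀ h_top
    rw [← ENNReal.mul_rpow_of_nonneg _ _ (by norm_num), mul_div_assoc, mul_mul_mul_comm,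
      ENNReal.mul_div_cancel h₀ h_top, ← sq, ← mul_pow, ← ENNReal.rpow_natCast,
      ← ENNReal.rpow_mul]
    norm_num
  have hholder := ENNReal.lintegral_mul_norm_pow_le (hk.mul hw)
    ((hk.mul (hg.pow_const 2)).div hw) (p := 1 / 2) (q := 1 / 2) (by norm_num) (by norm_num)
    (by norm_num)
  rw [lintegral_congr_ae hsplit]
  calc (∫⁻ a, (k a * w a) ^ (1 / 2 : ℝ) * (k a * g a ^ 2 / w a) ^ (1 / 2 : ℝ) ∂μ) ^ 2
      ≤ ((∫⁻ a, k a * w a ∂μ) ^ (1 / 2 : ℝ) * (∫⁻ a, k a * g a ^ 2 / w a ∂μ) ^ (1 / 2 : ℝ))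
          ^ 2 :=
        pow_le_pow_left' hholder 2
    _ = _ := by
        rw [← ENNReal.mul_rpow_of_nonneg _ _ (by norm_num), ← ENNReal.rpow_natCast,
          ← ENNReal.rpow_mul]
        norm_num

theorem lintegral_sq_lintegral_mul_le_of_schur_test {α β : Type*} [MeasurableSpace α]
    [MeasurableSpace β] {μ : Measure α} {ν : Measure β} [SFinite μ] [SFinite ν]
    {k : α → β → ℝ≥0∞} (hk : Measurable (uncurry k)) {p : β → ℝ≥0∞} {q : α → ℝ≥0∞}
    {f : β → ℝ≥0∞} (hp : AEMeasurable p ν) (hq : AEMeasurable q μ) (hf : AEMeasurable f ν)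
    (hp₀ : ∀ᵐ s ∂ν, p s ≠ 0) (hp_top : ∀ᵐ s ∂ν, p s ≠ ∞) {a b : ℝ≥0∞}
    (hkp : ∀ᵐ x ∂μ, ∫⁻ s, k x s * p s ∂ν ≤ a * q x)
    (hkq : ∀ᵐ s ∂ν, ∫⁻ x, k x s * q x ∂μ ≤ b * p s) :
    ∫⁻ x, (∫⁻ s, k x s * f s ∂ν) ^ 2 ∂μ ≤ a * b * ∫⁻ s, f s ^ 2 ∂ν := by
  set g : β → ℝ≥0∞ := fun s => f s ^ 2 / p s
  have hg : AEMeasurable g ν := (hf.pow_const 2).div hp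
  have hF : AEMeasurable (uncurry fun x s => q x * (k x s * g s)) (μ.prod ν) :=
    hq.comp_fst.mul (hk.aemeasurable.mul hg.comp_snd)
  calc ∫⁻ x, (∫⁻ s, k x s * f s ∂ν) ^ 2 ∂μ
      ≤ ∫⁻ x, a * ∫⁻ s, q x * (k x s * g s) ∂ν ∂μ := by
        refine lintegral_mono_ae (hkp.mono fun x hx => ?_)
        calc (∫⁻ s, k x s * f s ∂ν) ^ 2
            ≤ (∫⁻ s, k x s * p s ∂ν) * ∫⁻ s, k x s * g s ∂ν := by
              simpa only [g, mul_div_assoc] using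
                sq_lintegral_mul_le_lintegral_mul_mul_lintegral_mul_div
                  hk.of_uncurry_left.aemeasurable hp hf hp₀ hp_top
          _ ≤ a * q x * ∫⁻ s, k x s * g s ∂ν := by gcongr
          _ ≤ a * ∫⁻ s, q x * (k x s * g s) ∂ν := by
              rw [mul_assoc]
              gcongr
              exact lintegral_const_mul_le _ _
    _ = a * ∫⁻ x, ∫⁻ s, q x * (k x s * g s) ∂ν ∂μ :=
        lintegral_const_mul'' _ hF.lintegral_prod_right
    _ = a * ∫⁻ s, (∫⁻ x, k x s * q x ∂μ) * g s ∂ν := by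
        rw [lintegral_lintegral_swap hF]
        congr 1
        refine lintegral_congr fun s => ?_
        rw [← lintegral_mul_const'' (f := fun x => k x s * q x) (g s)
          (hk.of_uncurry_right.aemeasurable.mul hq)]
        exact lintegral_congr fun x => by ring
    _ ≤ a * ∫⁻ s, b * f s ^ 2 ∂ν := by
        gcongr 1
        refine lintegral_mono_ae ?_
        filter_upwards [hkq, hp₀, hp_top] with s hs h₀ h_top
        calc (∫⁻ x, k x s * q x ∂μ) * g s ≤ b * p s * (f s ^ 2 / p s) := by gcongr
          _ = b * f s ^ 2 := by rw [mul_assoc, ENNReal.mul_div_cancel h₀ h_top]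
    _ = a * b * ∫⁻ s, f s ^ 2 ∂ν := by
        rw [lintegral_const_mul'' _ (hf.pow_const 2), mul_assoc]

theorem eLpNorm_two_sq {α E : Type*} [MeasurableSpace α] [NormedAddCommGroup E]
    (μ : Measure α) (f : α → E) : eLpNorm f 2 μ ^ 2 = ∫⁻ x, ‖f x‖ₑ ^ 2 ∂μ := by
  simpa using eLpNorm_nnreal_pow_eq_lintegral (μ := μ) (f := f) (p := 2) two_ne_zero

theorem lintegral_Ioo_ofReal_eq_intervalIntegral {f : ℝ → ℝ} {a b : ℝ} (hab : a ≤ b)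
    (hf : Continuous f) (hf₀ : ∀ x ∈ Ioo a b, 0 ≤ f x) :
    ∫⁻ x in Ioo a b, ENNReal.ofReal (f x) = ENNReal.ofReal (∫ x in a..b, f x) := by
  rw [intervalIntegral.integral_of_le hab, integral_Ioc_eq_integral_Ioo,
    ofReal_integral_eq_lintegral_ofReal (hf.integrableOn_Icc.mono_set Ioo_subset_Icc_self)
      ((ae_restrict_iff' measurableSet_Ioo).2 (Filter.Eventually.of_forall hf₀))]

theorem lintegral_ite_lt_mul_eq_setLIntegral_Ioi (μ : Measure ℝ) (x : ℝ) (g : ℝ → ℝ≥0∞) :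
    ∫⁻ s, (if x < s then 1 else 0) * g s ∂μ = ∫⁻ s in Ioi x, g s ∂μ := by
  rw [← lintegral_indicator measurableSet_Ioi]
  congr 1 with s
  by_cases h : x < s <;> simp [h]

theorem lintegral_ite_lt_mul_eq_setLIntegral_Iio (μ : Measure ℝ) (s : ℝ) (g : ℝ → ℝ≥0∞) :
    ∫⁻ x, (if x < s then 1 else 0) * g x ∂μ = ∫⁻ x in Iio s, g x ∂μ := by
  rw [← lintegral_indicator measurableSet_Iio]
  congr 1 with x
  by_cases h : x < s <;> simp [h]

theorem integral_sin_pi_div_two_mul (x : ℝ) :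
    ∫ s in x..1, sin (π / 2 * s) = 2 / π * cos (π / 2 * x) := by
  rw [intervalIntegral.integral_comp_mul_left (fun t => sin t) (by positivity)]
  simp

theorem integral_cos_pi_div_two_mul (s : ℝ) :
    ∫ x in (0)..s, cos (π / 2 * x) = 2 / π * sin (π / 2 * s) := by
  rw [intervalIntegral.integral_comp_mul_left (fun t => cos t) (by positivity)]
  simp

theorem integral_sin_pi_div_two_mul_sq : ∫ s in (0)..1, sin (π / 2 * s) ^ 2 = 1 / 2 := by
  rw [intervalIntegral.integral_comp_mul_left (fun t => sin t ^ 2) (by positivity)]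
  simp
  field_simp

theorem integral_cos_pi_div_two_mul_sq : ∫ s in (0)..1, cos (π / 2 * s) ^ 2 = 1 / 2 := by
  rw [intervalIntegral.integral_comp_mul_left (fun t => cos t ^ 2) (by positivity)]
  simp [integral_cos_sq]
  field_simp

theorem sin_pi_div_two_mul_pos {s : ℝ} (hs : s ∈ Ioo (0 : ℝ) 2) : 0 < sin (π / 2 * s) :=
  sin_pos_of_pos_of_lt_pi (by nlinarith [pi_pos, hs.1]) (by nlinarith [pi_pos, hs.2])

theorem cos_pi_div_two_mul_nonneg {x : ℝ} (hx : x ∈ Icc (-1 : ℝ) 1) : 0 ≤ cos (π / 2 * x) :=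
  cos_nonneg_of_mem_Icc ⟨by nlinarith [pi_pos, hx.1], by nlinarith [pi_pos, hx.2]⟩

instance isFiniteMeasure_mu01 : IsFiniteMeasure mu01 :=
  isFiniteMeasure_restrict.2 measure_Ioo_lt_top.ne

theorem mu01_restrict_Ioi {x : ℝ} (hx : 0 ≤ x) :
    mu01.restrict (Ioi x) = volume.restrict (Ioo x 1) := by
  rw [mu01, Measure.restrict_restrict measurableSet_Ioi, Ioi_inter_Ioo, max_eq_left hx]

theorem mu01_restrict_Iio {s : ℝ} (hs : s ≤ 1) :
    mu01.restrict (Iio s) = volume.restrict (Ioo 0 s) := by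
  rw [mu01, Measure.restrict_restrict measurableSet_Iio, Iio_inter_Ioo, min_eq_left hs]

theorem setLIntegral_Ioi_sin_mu01 {x : ℝ} (hx : x ∈ Icc (0 : ℝ) 1) :
    ∫⁻ s in Ioi x, ENNReal.ofReal (sin (π / 2 * s)) ∂mu01
      = ENNReal.ofReal (2 / π) * ENNReal.ofReal (cos (π / 2 * x)) := by
  rw [mu01_restrict_Ioi hx.1, lintegral_Ioo_ofReal_eq_intervalIntegral hx.2 (by fun_prop)
    fun s hs => (sin_pi_div_two_mul_pos ⟨hx.1.trans_lt hs.1, hs.2.trans one_lt_two⟩).le,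
    integral_sin_pi_div_two_mul, ENNReal.ofReal_mul (by positivity)]

theorem setLIntegral_Iio_cos_mu01 {s : ℝ} (hs : s ∈ Icc (0 : ℝ) 1) :
    ∫⁻ x in Iio s, ENNReal.ofReal (cos (π / 2 * x)) ∂mu01
      = ENNReal.ofReal (2 / π) * ENNReal.ofReal (sin (π / 2 * s)) := by
  rw [mu01_restrict_Iio hs.2, lintegral_Ioo_ofReal_eq_intervalIntegral hs.1 (by fun_prop)
    fun x hx => cos_pi_div_two_mul_nonneg ⟨by linarith [hx.1], hx.2.le.trans hs.2⟩,
    integral_cos_pi_div_two_mul, ENNReal.ofReal_mul (by positivity)]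

theorem lintegral_sq_setLIntegral_Ioi_le {f : ℝ → ℝ≥0∞} (hf : AEMeasurable f mu01) :
    ∫⁻ x, (∫⁻ s in Ioi x, f s ∂mu01) ^ 2 ∂mu01
      ≤ ENNReal.ofReal (2 / π) * ENNReal.ofReal (2 / π) * ∫⁻ s, f s ^ 2 ∂mu01 := by
  have hIcc : ∀ᵐ x ∂mu01, x ∈ Icc (0 : ℝ) 1 :=
    (ae_restrict_mem measurableSet_Ioo).mono fun x hx => Ioo_subset_Icc_self hx
  simp_rw [← lintegral_ite_lt_mul_eq_setLIntegral_Ioi]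
  refine lintegral_sq_lintegral_mul_le_of_schur_test
    (Measurable.ite (measurableSet_lt measurable_fst measurable_snd) measurable_const
      measurable_const)
    (p := fun s => ENNReal.ofReal (sin (π / 2 * s)))
    (q := fun x => ENNReal.ofReal (cos (π / 2 * x))) (by fun_prop) (by fun_prop) hf ?_ ?_ ?_ ?_
  · filter_upwards [ae_restrict_mem measurableSet_Ioo] with s hs
    exact (ENNReal.ofReal_pos.2 (sin_pi_div_two_mul_pos ⟨hs.1, hs.2.trans one_lt_two⟩)).ne'
  · exact Filter.Eventually.of_forall fun _ => ENNReal.ofReal_ne_top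
  · filter_upwards [hIcc] with x hx
    rw [lintegral_ite_lt_mul_eq_setLIntegral_Ioi, setLIntegral_Ioi_sin_mu01 hx]
  · filter_upwards [hIcc] with s hs
    rw [lintegral_ite_lt_mul_eq_setLIntegral_Iio, setLIntegral_Iio_cos_mu01 hs]

/-- Integrating against `mu01` rather than over `Ioo x 1` makes `volterra f` depend only on the
`mu01`-class of `f`. -/
noncomputable def volterra (f : ℝ → ℂ) (x : ℝ) : ℂ := ∫ s in Ioi x, f s ∂mu01

theorem volterra_eq_setIntegral_Ioo (f : ℝ → ℂ) {x : ℝ} (hx : 0 ≤ x) :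
    volterra f x = ∫ s in Ioo x 1, f s := by
  rw [volterra, mu01_restrict_Ioi hx]

theorem volterra_congr_ae {f g : ℝ → ℂ} (h : f =ᵐ[mu01] g) : volterra f = volterra g :=
  funext fun _ => integral_congr_ae (ae_restrict_of_ae h)

theorem volterra_add {f g : ℝ → ℂ} (hf : Integrable f mu01) (hg : Integrable g mu01) :
    volterra (f + g) = volterra f + volterra g :=
  funext fun _ => integral_add hf.restrict hg.restrict

theorem volterra_smul (c : ℂ) (f : ℝ → ℂ) : volterra (c • f) = c • volterra f :=
  funext fun _ => integral_smul c f

theorem stronglyMeasurable_volterra {f : ℝ → ℂ} (hf : StronglyMeasurable f) :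
    StronglyMeasurable (volterra f) := by
  have hite : StronglyMeasurable (uncurry fun x s => if x < s then f s else 0) :=
    StronglyMeasurable.ite (measurableSet_lt measurable_fst measurable_snd)
      (hf.comp_measurable measurable_snd) stronglyMeasurable_const
  convert hite.integral_prod_right (ν := mu01) using 2 with x
  rw [volterra, ← integral_indicator measurableSet_Ioi]
  rfl

theorem eLpNorm_volterra_le {f : ℝ → ℂ} (hf : AEStronglyMeasurable f mu01) :
    eLpNorm (volterra f) 2 mu01 ≤ ENNReal.ofReal (2 / π) * eLpNorm f 2 mu01 := by
  rw [← ENNReal.pow_le_pow_left_iff two_ne_zero, mul_pow, eLpNorm_two_sq, eLpNorm_two_sq, sq]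
  calc ∫⁻ x, ‖volterra f x‖ₑ ^ 2 ∂mu01 ≤ ∫⁻ x, (∫⁻ s in Ioi x, ‖f s‖ₑ ∂mu01) ^ 2 ∂mu01 :=
        lintegral_mono fun x => pow_le_pow_left' (enorm_integral_le_lintegral_enorm _) 2
    _ ≤ _ := lintegral_sq_setLIntegral_Ioi_le hf.enorm

theorem memLp_volterra (f : Lp ℂ 2 mu01) : MemLp (volterra f) 2 mu01 :=
  ⟨(stronglyMeasurable_volterra (Lp.stronglyMeasurable f)).aestronglyMeasurable,
    (eLpNorm_volterra_le (Lp.aestronglyMeasurable f)).trans_lt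
      (ENNReal.mul_lt_top ENNReal.ofReal_lt_top (Lp.memLp f).2)⟩

theorem norm_le_of_ae_eq_volterra {g f : Lp ℂ 2 mu01} (h : g =ᵐ[mu01] volterra f) :
    ‖g‖ ≤ 2 / π * ‖f‖ := by
  rw [Lp.norm_def, Lp.norm_def, eLpNorm_congr_ae h,
    ← ENNReal.toReal_ofReal (by positivity : 0 ≤ 2 / π), ← ENNReal.toReal_mul]
  exact ENNReal.toReal_mono (ENNReal.mul_ne_top ENNReal.ofReal_ne_top (Lp.memLp f).2.ne)
    (eLpNorm_volterra_le (Lp.aestronglyMeasurable f))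

noncomputable def volterraCLM : Lp ℂ 2 mu01 →L[ℂ] Lp ℂ 2 mu01 :=
  LinearMap.mkContinuous
    { toFun f := (memLp_volterra f).toLp
      map_add' f g := by
        rw [← MemLp.toLp_add]
        refine MemLp.toLp_congr _ _ (.of_eq ?_)
        rw [volterra_congr_ae (Lp.coeFn_add f g),
          volterra_add ((Lp.memLp f).integrable one_le_two) ((Lp.memLp g).integrable one_le_two)]
      map_smul' c f := by
        rw [RingHom.id_apply, ← MemLp.toLp_const_smul c (memLp_volterra f)]
        refine MemLp.toLp_congr _ _ (.of_eq ?_)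
        rw [volterra_congr_ae (Lp.coeFn_smul c f), volterra_smul] }
    (2 / π) fun f => norm_le_of_ae_eq_volterra (memLp_volterra f).coeFn_toLp

theorem isIntOp_volterraCLM : IsIntOp volterraCLM := fun f => by
  filter_upwards [(memLp_volterra f).coeFn_toLp, ae_restrict_mem measurableSet_Ioo]
    with x hx hx01
  rw [← volterra_eq_setIntegral_Ioo _ hx01.1.le, ← hx]
  rfl

theorem ae_eq_volterra_of_isIntOp {K : Lp ℂ 2 mu01 →L[ℂ] Lp ℂ 2 mu01} (hK : IsIntOp K)
    (f : Lp ℂ 2 mu01) : K f =ᵐ[mu01] volterra f := by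
  filter_upwards [hK f, ae_restrict_mem measurableSet_Ioo] with x hx hx01
  rw [hx, volterra_eq_setIntegral_Ioo _ hx01.1.le]

theorem eLpNorm_ofReal_sq {r : ℝ → ℝ} (hr : Continuous r) :
    eLpNorm (fun x => (r x : ℂ)) 2 mu01 ^ 2 = ENNReal.ofReal (∫ x in (0)..1, r x ^ 2) := by
  have h (x : ℝ) : ‖(r x : ℂ)‖ₑ ^ 2 = ENNReal.ofReal (r x ^ 2) := by
    rw [← ofReal_norm, Complex.norm_real, Real.norm_eq_abs, ← ENNReal.ofReal_pow (abs_nonneg _),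
      sq_abs]
  simp_rw [eLpNorm_two_sq, h]
  exact lintegral_Ioo_ofReal_eq_intervalIntegral zero_le_one (hr.pow 2) fun x _ => sq_nonneg _

theorem norm_sq_of_ae_eq_ofReal {g : Lp ℂ 2 mu01} {r : ℝ → ℝ} (hr : Continuous r)
    (h : g =ᵐ[mu01] fun x => (r x : ℂ)) : ‖g‖ ^ 2 = ∫ x in (0)..1, r x ^ 2 := by
  rw [Lp.norm_def, ← ENNReal.toReal_pow, eLpNorm_congr_ae h, eLpNorm_ofReal_sq hr,
    ENNReal.toReal_ofReal (intervalIntegral.integral_nonneg zero_le_one fun x _ => sq_nonneg _)]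

theorem memLp_sin_pi_div_two_mul : MemLp (fun s => (sin (π / 2 * s) : ℂ)) 2 mu01 :=
  MemLp.of_bound (by fun_prop) 1 (Filter.Eventually.of_forall fun s => by
    rw [Complex.norm_real, Real.norm_eq_abs]
    exact abs_sin_le_one _)

noncomputable def sinLp : Lp ℂ 2 mu01 := memLp_sin_pi_div_two_mul.toLp

theorem coeFn_sinLp : sinLp =ᵐ[mu01] fun s => (sin (π / 2 * s) : ℂ) :=
  memLp_sin_pi_div_two_mul.coeFn_toLp

theorem norm_sinLp_sq : ‖sinLp‖ ^ 2 = 1 / 2 := by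
  rw [norm_sq_of_ae_eq_ofReal (by fun_prop) coeFn_sinLp, integral_sin_pi_div_two_mul_sq]

theorem volterra_sinLp :
    volterra sinLp =ᵐ[mu01] fun x => ((2 / π * cos (π / 2 * x) : ℝ) : ℂ) := by
  filter_upwards [ae_restrict_mem measurableSet_Ioo] with x hx
  rw [volterra_congr_ae coeFn_sinLp, volterra_eq_setIntegral_Ioo _ hx.1.le,
    ← integral_Ioc_eq_integral_Ioo, ← intervalIntegral.integral_of_le hx.2.le,
    intervalIntegral.integral_ofReal, integral_sin_pi_div_two_mul]

theorem norm_apply_sinLp {K : Lp ℂ 2 mu01 →L[ℂ] Lp ℂ 2 mu01} (hK : IsIntOp K) :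
    ‖K sinLp‖ = 2 / π * ‖sinLp‖ := by
  refine (sq_eq_sq₀ (norm_nonneg _) (by positivity)).1 ?_
  rw [mul_pow, norm_sinLp_sq, norm_sq_of_ae_eq_ofReal (by fun_prop)
    ((ae_eq_volterra_of_isIntOp hK sinLp).trans volterra_sinLp)]
  simp only [mul_pow]
  rw [intervalIntegral.integral_const_mul, integral_cos_pi_div_two_mul_sq]

/-- The operator `(K f)(x) = ∫_x^1 f(s) ds` is bounded on `L²((0,1), ℂ)` with norm `2/π`. -/
theorem statement7 :
    (∃ K : Lp ℂ 2 mu01 →L[ℂ] Lp ℂ 2 mu01, IsIntOp K) ∧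
    ∀ K : Lp ℂ 2 mu01 →L[ℂ] Lp ℂ 2 mu01, IsIntOp K → ‖K‖ = 2 / Real.pi := by
  refine ⟨⟨volterraCLM, isIntOp_volterraCLM⟩, fun K hK => le_antisymm ?_ ?_⟩
  · exact K.opNorm_le_bound (by positivity)
      fun f => norm_le_of_ae_eq_volterra (ae_eq_volterra_of_isIntOp hK f)
  · have hsinLp : 0 < ‖sinLp‖ := norm_pos_iff.2 fun h => by simpa [h] using norm_sinLp_sq
    exact le_of_mul_le_mul_right (norm_apply_sinLp hK ▸ K.le_opNorm sinLp) hsinLp
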